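/- Let Φ be a reduced crystallographic root system in a finite-dimensional real inner product space V, with a fixed choice of positive roots Φ⁺, and assume no irreducible component of Φ is of type G₂. Let S ⊆ Φ⁺ be a subset that is closed under subtraction of positive roots, i.e. whenever α ∈ S, β ∈ Φ⁺, and α − β ∈ Φ⁺, then α − β ∈ S. Then every positive root lying in the convex hull of S belongs to S: Φ⁺ ∩ conv(S) = S. -/

import Mathlib

/-!
Let `γ ∈ Φ⁺ ∩ conv(S)` with `γ ∉ S`, and let `f` be a functional defining `Φ⁺`. Without `G₂`
every root `α ≠ ±γ` has `⟪α, γ⟫ ≤ ⟪γ, γ⟫`, and in case of equality `α - γ` is a root. For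
`α ∈ S` that root must be negative, since otherwise closure under subtraction would give
`γ = α - (α - γ) ∈ S`. Hence `S` lies in the "lexicographic half-space"
`{x | ⟪x, γ⟫ < ⟪γ, γ⟫ ∨ (⟪x, γ⟫ = ⟪γ, γ⟫ ∧ f x < f γ)}`, which is convex and misses `γ`.
-/

open scoped RealInnerProductSpace

/-- `Φ` is a reduced crystallographic root system in the real inner product space `V`. -/
structure IsReducedCrystallographicRootSystem {V : Type*} [NormedAddCommGroup V]
    [InnerProductSpace ℝ V] (Φ : Set V) : Prop where
  finite : Φ.Finite
  ne_zero : ∀ α ∈ Φ, α ≠ (0 : V)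
  span : Submodule.span ℝ Φ = ⊤
  /-- `Φ` is stable under the reflection in each of its elements. -/
  reflection_mem : ∀ α ∈ Φ, ∀ β ∈ Φ, β - (2 * ⟪β, α⟫ / ⟪α, α⟫) • α ∈ Φ
  /-- crystallographic: all Cartan integers `⟨β, α∨⟩` are integers. -/
  crystallographic : ∀ α ∈ Φ, ∀ β ∈ Φ, ∃ n : ℤ, (n : ℝ) = 2 * ⟪β, α⟫ / ⟪α, α⟫
  /-- reduced: the only multiples of a root that are roots are `±` itself. -/
  reduced : ∀ α ∈ Φ, ∀ c : ℝ, c • α ∈ Φ → c = 1 ∨ c = -1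

/-- `P` is a (choice of) positive system for `Φ`: the set of roots on which some linear
functional, nonvanishing on `Φ`, is positive. -/
def IsPositiveSystem {V : Type*} [NormedAddCommGroup V] [InnerProductSpace ℝ V]
    (Φ P : Set V) : Prop :=
  P ⊆ Φ ∧ ∃ f : V →ₗ[ℝ] ℝ, (∀ α ∈ Φ, f α ≠ 0) ∧ P = {α ∈ Φ | 0 < f α}

/-- No irreducible component of `Φ` has type `G₂`.  For a reduced crystallographic root
system this holds if and only if no pair of roots has product of Cartan integers equal
to `3` (such a pair spans a `G₂` subsystem, and the only irreducible reduced
crystallographic root system containing such a pair is `G₂` itself). -/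
def HasNoG2Component {V : Type*} [NormedAddCommGroup V] [InnerProductSpace ℝ V]
    (Φ : Set V) : Prop :=
  ∀ α ∈ Φ, ∀ β ∈ Φ, (2 * ⟪α, β⟫ / ⟪β, β⟫) * (2 * ⟪β, α⟫ / ⟪α, α⟫) ≠ 3

namespace IsReducedCrystallographicRootSystem

variable {V : Type*} [NormedAddCommGroup V] [InnerProductSpace ℝ V] {Φ : Set V} {α β : V}

theorem inner_self_pos (hΦ : IsReducedCrystallographicRootSystem Φ) (hα : α ∈ Φ) :
    0 < ⟪α, α⟫ :=
  real_inner_self_pos.mpr (hΦ.ne_zero α hα)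

theorem neg_mem (hΦ : IsReducedCrystallographicRootSystem Φ) (hα : α ∈ Φ) : -α ∈ Φ := by
  have h := hΦ.reflection_mem α hα α hα
  rwa [mul_div_assoc, div_self (hΦ.inner_self_pos hα).ne', mul_one, two_smul,
    sub_add_cancel_left] at h

theorem inner_mul_inner_lt (hΦ : IsReducedCrystallographicRootSystem Φ) (hα : α ∈ Φ)
    (hβ : β ∈ Φ) (hne : α ≠ β) (hne' : α ≠ -β) :
    ⟪α, β⟫ * ⟪α, β⟫ < ⟪α, α⟫ * ⟪β, β⟫ := by
  refine (real_inner_mul_inner_self_le α β).lt_of_ne fun heq => ?_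
  have hnorm : ‖⟪β, α⟫‖ = ‖β‖ * ‖α‖ := by
    rw [real_inner_self_eq_norm_mul_norm, real_inner_self_eq_norm_mul_norm,
      real_inner_comm] at heq
    rw [Real.norm_eq_abs, ← sq_eq_sq₀ (abs_nonneg _) (by positivity), sq_abs]
    linear_combination heq
  obtain ⟨r, -, rfl⟩ := (norm_inner_eq_norm_iff (hΦ.ne_zero β hβ) (hΦ.ne_zero _ hα)).mp hnorm
  rcases hΦ.reduced β hβ r hα with rfl | rfl
  · exact hne (one_smul ℝ β)
  · exact hne' (neg_one_smul ℝ β)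

theorem exists_cartan_integers_of_inner_pos (hΦ : IsReducedCrystallographicRootSystem Φ)
    (hα : α ∈ Φ) (hβ : β ∈ Φ) (hne : α ≠ β) (hne' : α ≠ -β) (hpos : 0 < ⟪α, β⟫) :
    ∃ m n : ℤ, 0 < m ∧ 0 < n ∧ m * n < 4 ∧
      (m : ℝ) = 2 * ⟪β, α⟫ / ⟪α, α⟫ ∧ (n : ℝ) = 2 * ⟪α, β⟫ / ⟪β, β⟫ := by
  have hαα := hΦ.inner_self_pos hα
  have hββ := hΦ.inner_self_pos hβ
  obtain ⟨m, hm⟩ := hΦ.crystallographic α hα β hβ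
  obtain ⟨n, hn⟩ := hΦ.crystallographic β hβ α hα
  rw [real_inner_comm] at hm
  refine ⟨m, n, ?_, ?_, ?_, by rw [hm, real_inner_comm], hn⟩
  · exact_mod_cast (hm ▸ by positivity : (0 : ℝ) < m)
  · exact_mod_cast (hn ▸ by positivity : (0 : ℝ) < n)
  · have : (m * n : ℝ) < 4 := by
      rw [hm, hn, div_mul_div_comm, div_lt_iff₀ (by positivity)]
      nlinarith [hΦ.inner_mul_inner_lt hα hβ hne hne']
    exact_mod_cast this

theorem sub_mem_of_inner_pos (hΦ : IsReducedCrystallographicRootSystem Φ) (hα : α ∈ Φ)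
    (hβ : β ∈ Φ) (hne : α ≠ β) (hne' : α ≠ -β) (hpos : 0 < ⟪α, β⟫) : α - β ∈ Φ := by
  obtain ⟨m, n, hm0, hn0, hmn, hm, hn⟩ :=
    hΦ.exists_cartan_integers_of_inner_pos hα hβ hne hne' hpos
  obtain rfl | rfl : n = 1 ∨ m = 1 := by
    by_contra! h
    nlinarith [show 2 ≤ n by omega, show 2 ≤ m by omega]
  · have h := hΦ.reflection_mem β hβ α hα
    rwa [← hn, Int.cast_one, one_smul] at h
  · have h := hΦ.neg_mem (hΦ.reflection_mem α hα β hβ)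
    rwa [← hm, Int.cast_one, one_smul, neg_sub] at h

/-- A Cartan integer `⟨α, β∨⟩ ≥ 3` would force `⟨β, α∨⟩ = 1`, a pair of type `G₂`. -/
theorem inner_le_inner_self_of_hasNoG2Component (hΦ : IsReducedCrystallographicRootSystem Φ)
    (hG2 : HasNoG2Component Φ) (hα : α ∈ Φ) (hβ : β ∈ Φ) (hne : α ≠ β) (hne' : α ≠ -β) :
    ⟪α, β⟫ ≤ ⟪β, β⟫ := by
  have hββ := hΦ.inner_self_pos hβ
  rcases le_or_gt ⟪α, β⟫ 0 with hnonpos | hpos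
  · linarith
  obtain ⟨m, n, hm0, hn0, hmn, hm, hn⟩ :=
    hΦ.exists_cartan_integers_of_inner_pos hα hβ hne hne' hpos
  have hmn3 : n * m ≠ 3 := by
    have := hG2 α hα β hβ
    rw [← hn, ← hm] at this
    exact_mod_cast this
  have hn2 : (n : ℝ) ≤ 2 := by
    have : n ≤ 2 := by
      by_contra! h
      exact hmn3 (by nlinarith)
    exact_mod_cast this
  rw [hn, div_le_iff₀ hββ] at hn2
  linarith

end IsReducedCrystallographicRootSystem

theorem convex_setOf_lt_or_eq_and_lt {𝕜 E : Type*} [Field 𝕜] [LinearOrder 𝕜]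
    [IsStrictOrderedRing 𝕜] [AddCommGroup E] [Module 𝕜 E] (f g : E →ₗ[𝕜] 𝕜) (c d : 𝕜) :
    Convex 𝕜 {x | f x < c ∨ (f x = c ∧ g x < d)} := by
  refine convex_iff_forall_pos.mpr fun x hx y hy a b ha hb hab => ?_
  simp only [Set.mem_ofPred_eq, map_add, map_smul, smul_eq_mul] at hx hy ⊢
  have hc : c = a * c + b * c := by rw [← add_mul, hab, one_mul]
  have hd : d = a * d + b * d := by rw [← add_mul, hab, one_mul]
  have hxc : f x ≤ c := hx.elim le_of_lt fun h => h.1.le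
  have hyc : f y ≤ c := hy.elim le_of_lt fun h => h.1.le
  by_cases hlt : f x < c ∨ f y < c
  · left
    rcases hlt with h | h
    · linarith [mul_lt_mul_of_pos_left h ha, mul_le_mul_of_nonneg_left hyc hb.le]
    · linarith [mul_le_mul_of_nonneg_left hxc ha.le, mul_lt_mul_of_pos_left h hb]
  · push Not at hlt
    have hx' := hx.resolve_left hlt.1.not_gt
    have hy' := hy.resolve_left hlt.2.not_gt
    right
    constructor
    · rw [hx'.1, hy'.1, ← hc]
    · linarith [mul_lt_mul_of_pos_left hx'.2 ha, mul_lt_mul_of_pos_left hy'.2 hb]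

theorem pos_inter_convexHull_eq_of_closed_under_subtraction_general
    {V : Type*} [NormedAddCommGroup V] [InnerProductSpace ℝ V]
    {Φ Pos : Set V} (hΦ : IsReducedCrystallographicRootSystem Φ)
    (hPos : IsPositiveSystem Φ Pos) (hG2 : HasNoG2Component Φ)
    {S : Set V} (hSP : S ⊆ Pos)
    (hclosed : ∀ α ∈ S, ∀ β ∈ Pos, α - β ∈ Pos → α - β ∈ S) :
    Pos ∩ convexHull ℝ S = S := by
  obtain ⟨-, f, hf, rfl⟩ := hPos
  refine subset_antisymm ?_ fun α hα => ⟨hSP hα, subset_convexHull ℝ S hα⟩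
  rintro γ ⟨⟨hγΦ, hfγ⟩, hγS⟩
  by_contra hγ
  have hSL : S ⊆ {x | innerₗ V γ x < ⟪γ, γ⟫ ∨ (innerₗ V γ x = ⟪γ, γ⟫ ∧ f x < f γ)} := by
    intro α hαS
    obtain ⟨hαΦ, hfα⟩ := hSP hαS
    have hne : α ≠ γ := by rintro rfl; exact hγ hαS
    have hne' : α ≠ -γ := by rintro rfl; rw [map_neg] at hfα; linarith
    rw [Set.mem_ofPred_eq, innerₗ_apply_apply, real_inner_comm]
    refine (hΦ.inner_le_inner_self_of_hasNoG2Component hG2 hαΦ hγΦ hne hne').lt_or_eq.imp id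
      fun heq => ⟨heq, ?_⟩
    have hsub := hΦ.sub_mem_of_inner_pos hαΦ hγΦ hne hne' (heq ▸ hΦ.inner_self_pos hγΦ)
    have hnonpos : f (α - γ) ≤ 0 := by
      by_contra! hpos
      exact hγ (by simpa using hclosed α hαS (α - γ) ⟨hsub, hpos⟩ (by simpa using ⟨hγΦ, hfγ⟩))
    have := (hf _ hsub).lt_of_le hnonpos
    rw [map_sub] at this
    linarith
  have := convexHull_min hSL (convex_setOf_lt_or_eq_and_lt _ _ _ _) hγS
  simp at this

theorem pos_inter_convexHull_eq_of_closed_under_subtraction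
    {V : Type*} [NormedAddCommGroup V] [InnerProductSpace ℝ V] [FiniteDimensional ℝ V]
    {Φ Pos : Set V} (hΦ : IsReducedCrystallographicRootSystem Φ)
    (hPos : IsPositiveSystem Φ Pos) (hG2 : HasNoG2Component Φ)
    {S : Set V} (hSP : S ⊆ Pos)
    (hclosed : ∀ α ∈ S, ∀ β ∈ Pos, α - β ∈ Pos → α - β ∈ S) :
    Pos ∩ convexHull ℝ S = S :=
  pos_inter_convexHull_eq_of_closed_under_subtraction_general hΦ hPos hG2 hSP hclosed
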